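/- arXiv:2306.12429 — 8 statements merged into one kernel-verified Lean document; each statement's English description precedes it below -/
import Mathlib

section
/- For an algebra homomorphism Φ : U → V, the image of Φ is a semi-Peano algebra if and only if the kernel congruence of Φ is closed and balanced. -/
/-- An algebra (with operations `op i` of arity `ar i`) is semi-Peano if each
operation is injective and the images of distinct operations are disjoint. -/
def IsSemiPeano {ι A : Type*} {ar : ι → ℕ} (op : ∀ i, (Fin (ar i) → A) → A) : Prop :=
  (∀ i, Function.Injective (op i)) ∧
    ∀ i j, i ≠ j → ∀ (x : Fin (ar i) → A) (y : Fin (ar j) → A), op i x ≠ op j y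

/-- For a homomorphism `Φ : U → V` of algebras, the image of `Φ` (the algebra
induced on `Set.range Φ` by restricting the operations of `V`) is semi-Peano
iff the kernel congruence `{(x,y) : Φ x = Φ y}` is closed and balanced. -/
theorem image_isSemiPeano_iff_kernel_closed_balanced
    {ι U V : Type*} {ar : ι → ℕ}
    (opU : ∀ i, (Fin (ar i) → U) → U) (opV : ∀ i, (Fin (ar i) → V) → V)
    (Φ : U → V) (hΦ : ∀ i x, Φ (opU i x) = opV i (fun k => Φ (x k))) :
    (∃ imOp : ∀ i, (Fin (ar i) → Set.range Φ) → Set.range Φ,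
        (∀ i (x : Fin (ar i) → Set.range Φ), (imOp i x : V) = opV i (fun k => (x k : V))) ∧
        IsSemiPeano imOp)
    ↔ ((∀ i (x y : Fin (ar i) → U), Φ (opU i x) = Φ (opU i y) → ∀ k, Φ (x k) = Φ (y k)) ∧
       (∀ i j (x : Fin (ar i) → U) (y : Fin (ar j) → U), Φ (opU i x) = Φ (opU j y) → i = j)) := by
  constructor
  · rintro ⟨imOp, hcoe, hinj, hdisj⟩
    constructor
    · intro i x y h k
      have hx : ∀ k, Φ (x k) ∈ Set.range Φ := fun k => ⟨x k, rfl⟩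
      have hy : ∀ k, Φ (y k) ∈ Set.range Φ := fun k => ⟨y k, rfl⟩
      have : imOp i (fun k => ⟨Φ (x k), hx k⟩) = imOp i (fun k => ⟨Φ (y k), hy k⟩) := by
        apply Subtype.ext
        rw [hcoe, hcoe]
        simpa [hΦ] using h
      have := hinj i this
      exact congrArg Subtype.val (congrFun this k)
    · intro i j x y h
      by_contra hne
      have hx : ∀ k, Φ (x k) ∈ Set.range Φ := fun k => ⟨x k, rfl⟩
      have hy : ∀ k, Φ (y k) ∈ Set.range Φ := fun k => ⟨y k, rfl⟩
      apply hdisj i j hne (fun k => ⟨Φ (x k), hx k⟩) (fun k => ⟨Φ (y k), hy k⟩)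
      apply Subtype.ext
      rw [hcoe, hcoe]
      simpa [hΦ] using h
  · rintro ⟨hclosed, hbal⟩
    have hmem : ∀ i (x : Fin (ar i) → Set.range Φ),
        opV i (fun k => (x k : V)) ∈ Set.range Φ := by
      intro i x
      refine ⟨opU i (fun k => (x k).2.choose), ?_⟩
      rw [hΦ]
      congr 1
      funext k
      exact (x k).2.choose_spec
    refine ⟨fun i x => ⟨opV i (fun k => (x k : V)), hmem i x⟩, fun i x => rfl, ?_, ?_⟩
    · intro i x y h
      have h' : opV i (fun k => (x k : V)) = opV i (fun k => (y k : V)) :=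
        congrArg Subtype.val h
      funext k
      apply Subtype.ext
      have hx : ∀ k, Φ ((x k).2.choose) = (x k : V) := fun k => (x k).2.choose_spec
      have hy : ∀ k, Φ ((y k).2.choose) = (y k : V) := fun k => (y k).2.choose_spec
      have : Φ (opU i (fun k => (x k).2.choose)) = Φ (opU i (fun k => (y k).2.choose)) := by
        rw [hΦ, hΦ]
        simpa [hx, hy] using h'
      have := hclosed i _ _ this k
      rwa [hx, hy] at this
    · intro i j hne x y h
      apply hne
      have h' : opV i (fun k => (x k : V)) = opV j (fun k => (y k : V)) :=
        congrArg Subtype.val h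
      have hx : ∀ k, Φ ((x k).2.choose) = (x k : V) := fun k => (x k).2.choose_spec
      have hy : ∀ k, Φ ((y k).2.choose) = (y k : V) := fun k => (y k).2.choose_spec
      apply hbal i j (fun k => (x k).2.choose) (fun k => (y k).2.choose)
      rw [hΦ, hΦ]
      simpa [hx, hy] using h'
end

section
/- Let U be a unary semi-Peano algebra with a minimal generating set A. Then U is the disjoint union of the cyclic subalgebras ⟨a⟩ for a ∈ A; i.e., U = ⋃_{a∈A} ⟨a⟩ and ⟨a⟩ ∩ ⟨b⟩ = ∅ for distinct a, b ∈ A. -/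
/-- The action of a word `w ∈ F*` on a unary algebra `(U; act)`. -/
def wordAct {F U : Type*} (act : F → U → U) (w : List F) (x : U) : U :=
  w.foldr act x

/-- A unary algebra is semi-Peano iff `f(x) = g(y)` implies `f = g` and `x = y`. -/
def IsSemiPeanoUnary {F U : Type*} (act : F → U → U) : Prop :=
  ∀ f g x y, act f x = act g y → f = g ∧ x = y

/-- A set generates a unary algebra if the only subalgebra (subset closed under
all operations) containing it is the whole algebra. -/
def Generates {F U : Type*} (act : F → U → U) (A : Set U) : Prop :=
  ∀ S : Set U, A ⊆ S → (∀ f, ∀ x ∈ S, act f x ∈ S) → S = Set.univ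

lemma wordAct_mem {F U : Type*} (act : F → U → U) (S : Set U)
    (hS : ∀ f, ∀ x ∈ S, act f x ∈ S) (φ : List F) (x : U) (hx : x ∈ S) :
    wordAct act φ x ∈ S := by
  induction φ with
  | nil => exact hx
  | cons f w ih => exact hS f _ ih

lemma not_removable {F U : Type*} (act : F → U → U)
    (A : Set U) (hgen : Generates act A)
    (hmin : ∀ B ⊆ A, Generates act B → B = A)
    (a : U) (ha : a ∈ A) (c : U) (hc : c ∈ A) (hne : c ≠ a)
    (f : F) (φ : List F) (heq : a = wordAct act (f :: φ) c) : False := by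
  have hgenB : Generates act (A \ {a}) := by
    intro S hAS hcl
    have haS : a ∈ S := by
      rw [heq]
      exact wordAct_mem act S hcl _ c (hAS ⟨hc, hne⟩)
    refine hgen S (fun x hx => ?_) hcl
    by_cases hxa : x = a
    · rwa [hxa]
    · exact hAS ⟨hx, hxa⟩
  have := hmin (A \ {a}) Set.diff_subset hgenB
  have : a ∈ A \ {a} := this.symm ▸ ha
  exact this.2 rfl

/-- If `U` is a unary semi-Peano algebra with a minimal generating set `A`,
then `U` is the disjoint union of the cyclic subalgebras
`⟨a⟩ = {φ(a) : φ ∈ F*}` for `a ∈ A`. -/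
theorem semiPeano_unary_disjoint_union_of_cyclic
    {F U : Type*} (act : F → U → U) (hSP : IsSemiPeanoUnary act)
    (A : Set U) (hgen : Generates act A)
    (hmin : ∀ B ⊆ A, Generates act B → B = A) :
    (∀ u : U, ∃ a ∈ A, ∃ φ : List F, wordAct act φ a = u) ∧
    (∀ a ∈ A, ∀ b ∈ A, a ≠ b →
      ∀ φ ψ : List F, wordAct act φ a ≠ wordAct act ψ b) := by
  constructor
  · intro u
    have h := hgen {u : U | ∃ a ∈ A, ∃ φ : List F, wordAct act φ a = u}
      (fun a ha => ⟨a, ha, [], rfl⟩)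
      (fun f x hx => by
        obtain ⟨a, ha, φ, hφ⟩ := hx
        exact ⟨a, ha, f :: φ, by simp only [wordAct, List.foldr]; rw [show List.foldr act a φ = x from hφ]⟩)
    exact (h.symm ▸ Set.mem_univ u : _)
  · intro a ha b hb hab φ
    induction φ with
    | nil =>
      intro ψ h
      cases ψ with
      | nil => exact hab h
      | cons g ψ' => exact not_removable act A hgen hmin a ha b hb (Ne.symm hab) g ψ' h
    | cons f φ' ih =>
      intro ψ h
      cases ψ with
      | nil => exact not_removable act A hgen hmin b hb a ha hab f φ' h.symm
      | cons g ψ' =>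
        obtain ⟨-, h2⟩ := hSP f g _ _ h
        exact ih ψ' h2
end

section
/- Any two minimal generating sets of a unary semi-Peano algebra have the same cardinality. -/
namespace SemiPeanoAux

variable {F U : Type*} (act : F → U → U)

/-- One application step. -/
def Step (x y : U) : Prop := ∃ f, act f x = y

/-- Reachability by iterated applications. -/
abbrev Reach : U → U → Prop := Relation.ReflTransGen (Step act)

/-- Same connected component: a common ancestor. -/
def Conn (x y : U) : Prop := ∃ z, Reach act z x ∧ Reach act z y

variable {act}

theorem reach_closed {S : Set U} (hcl : ∀ f, ∀ x ∈ S, act f x ∈ S)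
    {x y : U} (hx : x ∈ S) (h : Reach act x y) : y ∈ S := by
  induction h with
  | refl => exact hx
  | tail _ hs ih =>
    obtain ⟨f, rfl⟩ := hs
    exact hcl f _ ih

theorem reach_from_gen {A : Set U} (hgen : Generates act A) (x : U) :
    ∃ a ∈ A, Reach act a x := by
  have h := hgen {y | ∃ a ∈ A, Reach act a y}
    (fun a ha => ⟨a, ha, Relation.ReflTransGen.refl⟩)
    (fun f x ⟨a, ha, hr⟩ => ⟨a, ha, hr.tail ⟨f, rfl⟩⟩)
  have : x ∈ {y | ∃ a ∈ A, Reach act a y} := by rw [h]; trivial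
  exact this

/-- Ancestors of a node are comparable. -/
theorem comparable (hSP : IsSemiPeanoUnary act) {z2 y : U}
    (h2 : Reach act z2 y) :
    ∀ {z1}, Reach act z1 y → Reach act z1 z2 ∨ Reach act z2 z1 := by
  induction h2 with
  | refl => exact fun h1 => Or.inl h1
  | @tail m y' h2' hs ih =>
    intro z1 h1
    rcases h1.cases_tail with rfl | ⟨c, hc1, hc2⟩
    · exact Or.inr (h2'.tail hs)
    · obtain ⟨f, hf⟩ := hs
      obtain ⟨g, hg⟩ := hc2
      obtain ⟨_, rfl⟩ := hSP g f c m (hg.trans hf.symm)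
      exact ih hc1

theorem conn_symm {x y : U} (h : Conn act x y) : Conn act y x := by
  obtain ⟨z, h1, h2⟩ := h; exact ⟨z, h2, h1⟩

theorem conn_trans (hSP : IsSemiPeanoUnary act) {x y w : U}
    (h1 : Conn act x y) (h2 : Conn act y w) : Conn act x w := by
  obtain ⟨z1, hz1x, hz1y⟩ := h1
  obtain ⟨z2, hz2y, hz2w⟩ := h2
  rcases comparable hSP hz2y hz1y with h | h
  · exact ⟨z1, hz1x, h.trans hz2w⟩
  · exact ⟨z2, h.trans hz1x, hz2w⟩

/-- If one element of a generating set reaches a different element,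
then the set is not minimal. -/
theorem removable {B : Set U} (hgenB : Generates act B)
    (hminB : ∀ C ⊆ B, Generates act C → C = B) {c d : U}
    (hc : c ∈ B) (hd : d ∈ B) (hne : c ≠ d) (hr : Reach act c d) : False := by
  have hgen' : Generates act (B \ {d}) := by
    intro S hsub hcl
    refine hgenB S ?_ hcl
    intro x hx
    by_cases hxd : x = d
    · subst hxd
      exact reach_closed hcl (hsub ⟨hc, hne⟩) hr
    · exact hsub ⟨hx, hxd⟩
  have heq := hminB (B \ {d}) Set.diff_subset hgen'
  have : d ∈ B \ {d} := by rw [heq]; exact hd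
  exact this.2 rfl

/-- In a minimal generating set, connected elements are equal. -/
theorem unique_in_min (hSP : IsSemiPeanoUnary act) {B : Set U}
    (hgenB : Generates act B)
    (hminB : ∀ C ⊆ B, Generates act C → C = B) {b b' : U}
    (hb : b ∈ B) (hb' : b' ∈ B) (h : Conn act b b') : b = b' := by
  by_contra hne
  obtain ⟨z, hzb, hzb'⟩ := h
  obtain ⟨c, hc, hcz⟩ := reach_from_gen hgenB z
  by_cases hcd : c = b'
  · subst hcd
    exact removable hgenB hminB hc hb (fun h => hne h.symm) (hcz.trans hzb)
  · exact removable hgenB hminB hc hb' hcd (hcz.trans hzb')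

end SemiPeanoAux

/-- Any two minimal generating sets of a unary semi-Peano algebra are
equinumerous, so the rank is well defined. -/
theorem semiPeano_unary_minimal_generating_sets_equinumerous
    {F U : Type*} (act : F → U → U) (hSP : IsSemiPeanoUnary act)
    (A B : Set U)
    (hgenA : Generates act A) (hminA : ∀ C ⊆ A, Generates act C → C = A)
    (hgenB : Generates act B) (hminB : ∀ C ⊆ B, Generates act C → C = B) :
    Cardinal.mk A = Cardinal.mk B := by
  open SemiPeanoAux in
  have exB : ∀ x : U, ∃ b ∈ B, Conn act x b := by
    intro x
    obtain ⟨b, hb, hr⟩ := SemiPeanoAux.reach_from_gen hgenB x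
    exact ⟨b, hb, b, hr, Relation.ReflTransGen.refl⟩
  have exA : ∀ x : U, ∃ a ∈ A, Conn act x a := by
    intro x
    obtain ⟨a, ha, hr⟩ := SemiPeanoAux.reach_from_gen hgenA x
    exact ⟨a, ha, a, hr, Relation.ReflTransGen.refl⟩
  let φ : A → B := fun a => ⟨(exB a).choose, (exB a).choose_spec.1⟩
  let ψ : B → A := fun b => ⟨(exA b).choose, (exA b).choose_spec.1⟩
  have hφ : ∀ a : A, SemiPeanoAux.Conn act (a : U) (φ a) :=
    fun a => (exB a).choose_spec.2
  have hψ : ∀ b : B, SemiPeanoAux.Conn act (b : U) (ψ b) :=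
    fun b => (exA b).choose_spec.2
  refine Cardinal.mk_congr ⟨φ, ψ, ?_, ?_⟩
  · intro a
    apply Subtype.ext
    exact (SemiPeanoAux.unique_in_min hSP hgenA hminA (ψ (φ a)).2 a.2
      (SemiPeanoAux.conn_symm (SemiPeanoAux.conn_trans hSP (hφ a) (hψ (φ a)))))
  · intro b
    apply Subtype.ext
    exact (SemiPeanoAux.unique_in_min hSP hgenB hminB (φ (ψ b)).2 b.2
      (SemiPeanoAux.conn_symm (SemiPeanoAux.conn_trans hSP (hψ b) (hφ (ψ b)))))
end

section
/- In the cyclic unary semi-Peano algebra F/ω (the free unary algebra on one generator a₀ modulo the least closed and balanced congruence identifying a₀ with ω(a₀)), if φ(a) = a for the canonical generator a and a word φ, then φ = ωⁿ for some n ≥ 0. -/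
/-- `wpow ω n` is the word `ωⁿ`. -/
def wpow {F : Type*} (ω : List F) (n : ℕ) : List F :=
  (List.replicate n ω).flatten

/-- One-step relation generating the congruence of `F/ω`: a word `φ` (read as
`φ(a₀)`) is identified with `φω` (read as `φ(ω(a₀))`). -/
def wstep {F : Type*} (ω : List F) (φ ψ : List F) : Prop :=
  ψ = φ ++ ω

/-- `F/ω`: the free unary algebra on one generator `a₀` modulo the least closed
and balanced congruence identifying `a₀` with `ω(a₀)`. Concretely: words
`φ ∈ F*` (representing `φ(a₀)`) with `φ` identified with `φωⁿ`. -/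
def FmodW {F : Type*} (ω : List F) : Type _ :=
  Quot (wstep ω)

/-- The class of the word `φ` in `F/ω`. -/
def FmodW.mk {F : Type*} (ω : List F) (φ : List F) : FmodW ω :=
  Quot.mk _ φ

/-- The canonical generator of `F/ω` (the class of `a₀`, i.e. of the empty word). -/
def FmodW.gen {F : Type*} (ω : List F) : FmodW ω :=
  FmodW.mk ω []

/-- The unary operation `f` on `F/ω`, acting by prepending the letter `f`. -/
def FmodW.op {F : Type*} (ω : List F) (f : F) : FmodW ω → FmodW ω :=
  Quot.lift (fun φ => FmodW.mk ω (f :: φ))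
    (fun φ ψ h => Quot.sound (show f :: ψ = (f :: φ) ++ ω by rw [h]; rfl))

/-- In `F/ω`, if `φ(a) = a` for the canonical generator `a`, then `φ = ωⁿ` for
some `n ≥ 0`. -/
theorem FmodW.word_fixing_gen_eq_pow {F : Type*} (ω φ : List F)
    (h : wordAct (FmodW.op ω) φ (FmodW.gen ω) = FmodW.gen ω) :
    ∃ n : ℕ, φ = wpow ω n := by
  have hact : ∀ (ψ χ : List F),
      wordAct (FmodW.op ω) ψ (FmodW.mk ω χ) = FmodW.mk ω (ψ ++ χ) := by
    intro ψ χ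
    induction ψ with
    | nil => rfl
    | cons f t ih => simp [wordAct, List.foldr] at ih ⊢; rw [ih]; rfl
  have h' : FmodW.mk ω φ = FmodW.mk ω [] := by
    have := hact φ []
    rw [List.append_nil] at this
    rw [← this]; exact h
  have key : ∀ a b : List F, Relation.EqvGen (wstep ω) a b →
      ∃ i j : ℕ, a ++ wpow ω i = b ++ wpow ω j := by
    intro a b hab
    induction hab with
    | rel x y hxy => exact ⟨1, 0, by rw [hxy]; simp [wpow]⟩
    | refl x => exact ⟨0, 0, rfl⟩
    | symm x y _ ih => obtain ⟨i, j, hij⟩ := ih; exact ⟨j, i, hij.symm⟩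
    | trans x y z _ _ ih1 ih2 =>
      obtain ⟨i, j, hij⟩ := ih1
      obtain ⟨k, l, hkl⟩ := ih2
      refine ⟨i + k, l + j, ?_⟩
      have : x ++ (wpow ω i ++ wpow ω k) = z ++ (wpow ω l ++ wpow ω j) := by
        have comm : wpow ω j ++ wpow ω k = wpow ω k ++ wpow ω j := by
          simp [wpow, ← List.flatten_append, ← List.replicate_add, Nat.add_comm]
        rw [← List.append_assoc, hij, List.append_assoc, comm,
          ← List.append_assoc, hkl, List.append_assoc]
      simpa [wpow, ← List.flatten_append, ← List.replicate_add] using this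
  obtain ⟨i, j, hij⟩ := key φ [] (Quot.eqvGen_exact h')
  simp only [List.nil_append] at hij
  rcases eq_or_ne ω [] with hω | hω
  · subst hω
    exact ⟨0, by simpa [wpow] using hij⟩
  · have hlen : φ.length + i * ω.length = j * ω.length := by
      have := congrArg List.length hij
      simpa [wpow, List.length_flatten, Nat.mul_comm] using this
    have hij' : i ≤ j := by
      by_contra hc
      push_neg at hc
      have : j * ω.length < i * ω.length :=
        (Nat.mul_lt_mul_right (List.length_pos_iff.mpr hω)).mpr hc
      omega
    refine ⟨j - i, ?_⟩
    have hsplit : wpow ω j = wpow ω (j - i) ++ wpow ω i := by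
      conv_lhs => rw [show j = (j - i) + i by omega]
      rw [wpow, wpow, wpow, List.replicate_add, List.flatten_append]
    rw [hsplit] at hij
    exact List.append_cancel_right hij
end

section
/- In F/ω, if φ(b) = b for some element b and some word φ, then φ is conjugate to ωⁿ for some n ≥ 0, i.e., there is a word α with φα = αωⁿ. -/
lemma wpow_add {F : Type*} (ω : List F) (m n : ℕ) :
    wpow ω (m + n) = wpow ω m ++ wpow ω n := by
  induction m with
  | zero => simp [wpow]
  | succ k ih =>
      have : k + 1 + n = (k + n) + 1 := by omega
      rw [this]
      simp only [wpow, List.replicate_succ, List.flatten_cons] at *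
      rw [ih]; simp

lemma wpow_length {F : Type*} (ω : List F) (n : ℕ) :
    (wpow ω n).length = n * ω.length := by
  induction n with
  | zero => simp [wpow]
  | succ k ih =>
      simp only [wpow, List.replicate_succ, List.flatten_cons, List.length_append] at *
      rw [ih]; ring

lemma wordAct_mk {F : Type*} (ω : List F) (φ β : List F) :
    wordAct (FmodW.op ω) φ (Quot.mk (wstep ω) β) = Quot.mk (wstep ω) (φ ++ β) := by
  induction φ with
  | nil => rfl
  | cons f φ ih =>
      show FmodW.op ω f (wordAct (FmodW.op ω) φ (Quot.mk (wstep ω) β)) = _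
      rw [ih]; rfl

lemma eqvgen_wstep {F : Type*} (ω : List F) {u v : List F}
    (h : Relation.EqvGen (wstep ω) u v) :
    ∃ i j, u ++ wpow ω i = v ++ wpow ω j := by
  induction h with
  | rel u v h =>
      refine ⟨1, 0, ?_⟩
      simp [wstep] at h
      simp [wpow, h]
  | refl u => exact ⟨0, 0, rfl⟩
  | symm u v _ ih => obtain ⟨i, j, hij⟩ := ih; exact ⟨j, i, hij.symm⟩
  | trans u v w _ _ ih1 ih2 =>
      obtain ⟨i, j, h1⟩ := ih1
      obtain ⟨k, l, h2⟩ := ih2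
      refine ⟨i + k, l + j, ?_⟩
      rw [wpow_add, wpow_add, ← List.append_assoc, ← List.append_assoc, h1,
        List.append_assoc, ← wpow_add, Nat.add_comm j k, wpow_add,
        ← List.append_assoc, h2, List.append_assoc, ← wpow_add]


/-- In `F/ω`, if `φ(b) = b` for some element `b` and some word `φ`, then `φ` is
conjugate to `ωⁿ` for some `n ≥ 0`: there is a word `α` with `φα = αωⁿ`. -/
theorem FmodW.word_fixing_elem_conjugate_pow {F : Type*} (ω : List F)
    (b : FmodW ω) (φ : List F)
    (h : wordAct (FmodW.op ω) φ b = b) :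
    ∃ (n : ℕ) (α : List F), φ ++ α = α ++ wpow ω n := by
  rcases φ.eq_nil_or_concat with rfl | _
  · exact ⟨0, [], rfl⟩
  obtain ⟨β, rfl⟩ := Quot.exists_rep b
  rw [wordAct_mk] at h
  obtain ⟨i, j, hij⟩ := eqvgen_wstep ω (Quot.eqvGen_exact h)
  have hlen : φ.length + (β.length + i * ω.length) = β.length + j * ω.length := by
    have := congrArg List.length hij
    simpa [wpow_length] using this
  by_cases hφ : φ = []
  · exact ⟨0, [], by simp [hφ, wpow]⟩
  · have hω : ω ≠ [] := by
      rintro rfl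
      simp only [List.length_nil, Nat.mul_zero] at hlen
      exact hφ (List.eq_nil_of_length_eq_zero (by omega))
    have hωl : 0 < ω.length := List.length_pos_iff.2 hω
    have hji : i ≤ j := by nlinarith
    refine ⟨j - i, β ++ wpow ω i, ?_⟩
    rw [← List.append_assoc, List.append_assoc φ β, List.append_assoc β, ← wpow_add]
    rw [List.append_assoc] at hij
    rw [hij]
    have : i + (j - i) = j := by omega
    rw [this]
end

section
/- Let ω, ω′ be words in a free monoid with ω′ ≠ 1. If there exist n, m ≥ 0 and words α, β such that ωα = αω′ⁿ and ω′β = βωᵐ, then nm = 1 (so n = m = 1) and hence ω and ω′ are conjugate. -/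
/-- Let `ω, ω′` be words with `ω′ ≠ 1`. If `ωα = αω′ⁿ` and `ω′β = βωᵐ` for some
`n, m ≥ 0` and words `α, β`, then `nm = 1` (so `n = m = 1`) and hence `ω` and
`ω′` are conjugate. -/
theorem conjugate_powers_force_nm_one {F : Type*} (ω ω' : List F)
    (hω' : ω' ≠ []) (n m : ℕ) (α β : List F)
    (h1 : ω ++ α = α ++ wpow ω' n) (h2 : ω' ++ β = β ++ wpow ω m) :
    n * m = 1 ∧ ∃ φ : List F, ω ++ φ = φ ++ ω' := by
  have l1 : ω.length = n * ω'.length := by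
    have := congrArg List.length h1
    simp [wpow_length] at this
    omega
  have l2 : ω'.length = m * ω.length := by
    have := congrArg List.length h2
    simp [wpow_length] at this
    omega
  have hpos : 0 < ω'.length := List.length_pos_iff.mpr hω'
  have hnm : n * m = 1 := by nlinarith [l1, l2]
  have hn : n = 1 := Nat.eq_one_of_mul_eq_one_right hnm
  refine ⟨hnm, α, ?_⟩
  have : wpow ω' n = ω' := by simp [wpow, hn]
  rw [this] at h1
  exact h1
end

section
/- If ω = βα and ω′ = αβ for words α, β, then the map Φ : F/ω → F/ω′ sending the class of the word φ (i.e., φ(a)) to φβ(b) is a well-defined isomorphism of unary algebras, where a, b are the canonical generators. -/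
/-- If `ω = βα` and `ω′ = αβ`, then the map `Φ : F/ω → F/ω′` sending the class
of a word `φ` (i.e. `φ(a)`) to `φβ(b)` is a well-defined isomorphism of unary
algebras, where `a`, `b` are the canonical generators. -/
theorem FmodW.conjugate_iso {F : Type*} (α β : List F) :
    ∃ Φ : FmodW (β ++ α) ≃ FmodW (α ++ β),
      (∀ φ : List F, Φ (FmodW.mk (β ++ α) φ) = FmodW.mk (α ++ β) (φ ++ β)) ∧
      ∀ f x, Φ (FmodW.op (β ++ α) f x) = FmodW.op (α ++ β) f (Φ x) := by
  refine ⟨⟨Quot.lift (fun φ => FmodW.mk (α ++ β) (φ ++ β))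
      (fun φ ψ h => Quot.sound (show ψ ++ β = (φ ++ β) ++ (α ++ β) by
        subst h; simp)),
    Quot.lift (fun φ => FmodW.mk (β ++ α) (φ ++ α))
      (fun φ ψ h => Quot.sound (show ψ ++ α = (φ ++ α) ++ (β ++ α) by
        subst h; simp)), ?_, ?_⟩, fun φ => rfl, ?_⟩
  · apply Quot.ind; intro φ
    exact (Quot.sound (show wstep (β ++ α) φ ((φ ++ β) ++ α) by simp [wstep])).symm
  · apply Quot.ind; intro φ
    exact (Quot.sound (show wstep (α ++ β) φ ((φ ++ α) ++ β) by simp [wstep])).symm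
  · intro f
    apply Quot.ind; intro φ
    rfl
end

section
/- Every cyclic finitely presented unary semi-Peano algebra is isomorphic to F/ω for some word ω over the operation symbols. -/
/-- The free unary algebra over `F` on the generating set `X`: its elements are
pairs `(w, x)` representing `w(x)`, and the operation `f` prepends the letter. -/
def freeAct {F : Type*} (X : Type*) (f : F) : List F × X → List F × X :=
  fun w => (f :: w.1, w.2)

/-- `θ` is a closed and balanced congruence on the unary algebra `(U; act)`. -/
def IsCBCong {F U : Type*} (act : F → U → U) (θ : U → U → Prop) : Prop :=
  Equivalence θ ∧ (∀ f x y, θ x y → θ (act f x) (act f y)) ∧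
    (∀ f x y, θ (act f x) (act f y) → θ x y) ∧
    (∀ f g x y, θ (act f x) (act g y) → f = g)

/-- `boxminus act R`: the least closed and balanced congruence on `(U; act)`
containing the set of relations `R`. -/
def boxminus {F U : Type*} (act : F → U → U) (R : Set (U × U)) : U → U → Prop :=
  fun a b => ∀ θ : U → U → Prop, IsCBCong act θ → (∀ p ∈ R, θ p.1 p.2) → θ a b

/-- A unary algebra is finitely presented (as a semi-Peano algebra) if it is
isomorphic to `Free(X)/⊟(R)` for some finite `X` and finite `R`; equivalently
there is a surjective homomorphism `π` from the free unary algebra on a finite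
`X` whose kernel is exactly `⊟(R)` for a finite `R`. -/
def IsFinPresented {F U : Type*} (act : F → U → U) : Prop :=
  ∃ (X : Type) (_ : Finite X) (R : Set ((List F × X) × (List F × X))) (_ : R.Finite)
    (π : List F × X → U),
    Function.Surjective π ∧ (∀ f w, π (freeAct X f w) = act f (π w)) ∧
    ∀ w w', π w = π w' ↔ boxminus (freeAct X) R w w'

lemma wordAct_append {F U : Type*} (act : F → U → U) (w w' : List F) (x : U) :
    wordAct act (w ++ w') x = wordAct act w (wordAct act w' x) := by
  simp [wordAct, List.foldr_append]

lemma wpow_succ {F : Type*} (ω : List F) (n : ℕ) :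
    wpow ω (n + 1) = ω ++ wpow ω n := by
  simp [wpow, List.replicate_succ]

lemma wpow_succ' {F : Type*} (ω : List F) (n : ℕ) :
    wpow ω (n + 1) = wpow ω n ++ ω := by
  induction n with
  | zero => simp [wpow]
  | succ k ih => rw [wpow_succ, wpow_succ ω k, List.append_assoc, ← ih, ← wpow_succ]

lemma peel {F U : Type*} {act : F → U → U} (hSP : IsSemiPeanoUnary act) :
    ∀ (w w' : List F) (x y : U), w.length ≤ w'.length →
      wordAct act w x = wordAct act w' y →
      ∃ τ, w' = w ++ τ ∧ x = wordAct act τ y := by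
  intro w
  induction w with
  | nil => intro w' x y _ h; exact ⟨w', rfl, h⟩
  | cons f w1 ih =>
    intro w' x y hlen h
    cases w' with
    | nil => simp at hlen
    | cons g w1' =>
      simp only [List.length_cons, Nat.add_le_add_iff_right] at hlen
      obtain ⟨hfg, h2⟩ := hSP f g (wordAct act w1 x) (wordAct act w1' y) h
      obtain ⟨τ, hτ1, hτ2⟩ := ih w1' x y hlen h2
      exact ⟨τ, by rw [hfg, hτ1]; rfl, hτ2⟩

/-- Every cyclic finitely presented unary semi-Peano algebra is isomorphic to
`F/ω` for some word `ω` over the operation symbols. -/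
theorem cyclic_finPresented_semiPeano_iso_FmodW
    {F : Type*} {U : Type*} (act : F → U → U)
    (hSP : IsSemiPeanoUnary act)
    (hcyc : ∃ a : U, Generates act {a})
    (hfp : IsFinPresented act) :
    ∃ (ω : List F) (e : U ≃ FmodW ω),
      ∀ f x, e (act f x) = FmodW.op ω f (e x) := by
  classical
  obtain ⟨a, hgen⟩ := hcyc
  set π : List F → U := fun w => wordAct act w a with hπ
  -- surjectivity of π
  have hsurj : Function.Surjective π := by
    intro x
    have hrange : Set.range π = Set.univ := by
      apply hgen
      · intro z hz
        rcases hz with rfl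
        exact ⟨[], rfl⟩
      · rintro f x ⟨w, rfl⟩
        exact ⟨f :: w, rfl⟩
    have : x ∈ Set.range π := by rw [hrange]; trivial
    exact this
  -- choice of ω
  have hex : ∃ ω : List F, wordAct act ω a = a ∧
      ∀ τ : List F, wordAct act τ a = a → ∃ n, τ = wpow ω n := by
    by_cases htriv : ∀ τ : List F, wordAct act τ a = a → τ = []
    · refine ⟨[], rfl, fun τ hτ => ⟨0, by simpa [wpow] using htriv τ hτ⟩⟩
    · push_neg at htriv
      obtain ⟨τ0, hτ0, hτ0ne⟩ := htriv
      have hP : ∃ n, ∃ τ : List F, τ.length = n ∧ τ ≠ [] ∧ wordAct act τ a = a :=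
        ⟨τ0.length, τ0, rfl, hτ0ne, hτ0⟩
      obtain ⟨ω, hlen, hωne, hωa⟩ := Nat.find_spec hP
      refine ⟨ω, hωa, ?_⟩
      suffices h : ∀ n (τ : List F), τ.length = n → wordAct act τ a = a → ∃ k, τ = wpow ω k by
        exact fun τ hτ => h τ.length τ rfl hτ
      intro n
      induction n using Nat.strong_induction_on with
      | _ n ih =>
        intro τ hn hτa
        cases' eq_or_ne τ [] with h h
        · exact ⟨0, by simp [h, wpow]⟩
        · have hmin : ω.length ≤ τ.length := by
            rw [hlen]
            exact Nat.find_min' hP ⟨τ, rfl, h, hτa⟩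
          obtain ⟨ρ, hρ1, hρ2⟩ := peel hSP ω τ a a hmin (by rw [hωa, hτa])
          have hρa : wordAct act ρ a = a := hρ2.symm
          have hρlen : ρ.length < n := by
            subst hn
            have : 0 < ω.length := List.length_pos_iff.mpr hωne
            rw [hρ1]
            simp only [List.length_append]
            omega
          obtain ⟨k, hk⟩ := ih ρ.length hρlen ρ rfl hρa
          exact ⟨k + 1, by rw [hρ1, hk, wpow_succ]⟩
  obtain ⟨ω, hωa, hωall⟩ := hex
  -- powers act trivially
  have hpow : ∀ n, wordAct act (wpow ω n) a = a := by
    intro n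
    induction n with
    | zero => rfl
    | succ k ih => rw [wpow_succ, wordAct_append, ih, hωa]
  -- mk absorbs appended powers
  have hmkpow : ∀ n (w : List F), FmodW.mk ω (w ++ wpow ω n) = FmodW.mk ω w := by
    intro n
    induction n with
    | zero => intro w; simp [wpow]
    | succ k ih =>
      intro w
      have h1 : w ++ wpow ω (k + 1) = (w ++ wpow ω k) ++ ω := by
        rw [wpow_succ', List.append_assoc]
      rw [h1]
      have := Quot.sound (show wstep ω (w ++ wpow ω k) ((w ++ wpow ω k) ++ ω) from rfl)
      calc FmodW.mk ω ((w ++ wpow ω k) ++ ω) = FmodW.mk ω (w ++ wpow ω k) := this.symm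
        _ = FmodW.mk ω w := ih w
  -- key kernel lemma
  have K : ∀ w w', π w = π w' → FmodW.mk ω w = FmodW.mk ω w' := by
    have half : ∀ w w' : List F, w.length ≤ w'.length → π w = π w' →
        FmodW.mk ω w = FmodW.mk ω w' := by
      intro w w' hlen hp
      obtain ⟨τ, hτ1, hτ2⟩ := peel hSP w w' a a hlen hp
      obtain ⟨n, hn⟩ := hωall τ hτ2.symm
      rw [hτ1, hn, hmkpow]
    intro w w' hp
    rcases le_total w.length w'.length with h | h
    · exact half w w' h hp
    · exact (half w' w h hp.symm).symm
  -- the maps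
  set e : U → FmodW ω := fun x => FmodW.mk ω (Classical.choose (hsurj x)) with he
  have hspec : ∀ x, π (Classical.choose (hsurj x)) = x := fun x => Classical.choose_spec (hsurj x)
  set g : FmodW ω → U := Quot.lift π (fun φ ψ (h : ψ = φ ++ ω) => by
    subst h
    show π φ = π (φ ++ ω)
    simp only [hπ]
    rw [wordAct_append, hωa]) with hg
  have hge : ∀ x, g (e x) = x := fun x => hspec x
  have heg : ∀ q, e (g q) = q := by
    intro q
    induction q using Quot.ind with
    | _ φ =>
    show FmodW.mk ω (Classical.choose (hsurj (π φ))) = FmodW.mk ω φ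
    exact K _ _ (hspec (π φ))
  refine ⟨ω, ⟨e, g, hge, heg⟩, ?_⟩
  intro f x
  show FmodW.mk ω (Classical.choose (hsurj (act f x))) =
    FmodW.op ω f (FmodW.mk ω (Classical.choose (hsurj x)))
  have h1 : π (f :: Classical.choose (hsurj x)) = act f x := by
    show act f (π (Classical.choose (hsurj x))) = act f x
    rw [hspec]
  rw [show FmodW.op ω f (FmodW.mk ω (Classical.choose (hsurj x))) =
      FmodW.mk ω (f :: Classical.choose (hsurj x)) from rfl]
  exact K _ _ (by rw [hspec, ← h1])
end
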